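/- arXiv:2006.06005 — 2 statements merged into one kernel-verified Lean document; each statement's English description precedes it below -/
import Mathlib

section
/- Fix noise rates η₀, η₁ ∈ [0, 1/2) with η₀ + η₁ < 1, and define the modified loss on {0,1}×{0,1} by ℓ̃(y₁, y₂) = ((1 − η_{1⊕y₂})·1[y₁ ≠ y₂] − η_{y₂}·1[y₁ = y₂])/(1 − η₀ − η₁), where ⊕ is addition mod 2. Let Y be a {0,1}-valued random variable with true conditional law p(·) and let Ỹ be obtained from Y by flipping label 0 to 1 with probability η₀ and label 1 to 0 with probability η₁. Then for every z ∈ {0,1}, E[ℓ̃(z, Ỹ)] = P[z ≠ Y]. -/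
/-- The modified loss ℓ̃(y₁,y₂) = ((1 − η_{1⊕y₂})·1[y₁≠y₂] − η_{y₂}·1[y₁=y₂])/(1−η₀−η₁),
with labels encoded as Booleans and η true = η₁, η false = η₀. -/
noncomputable def modLoss (η : Bool → ℝ) (y₁ y₂ : Bool) : ℝ :=
  ((1 - η (!y₂)) * (if y₁ ≠ y₂ then 1 else 0) - η y₂ * (if y₁ = y₂ then 1 else 0)) /
    (1 - η false - η true)

/-- under two-sided classification noise with flip rates η₀, η₁ < 1/2,
the modified loss on the noisy label is an unbiased estimator of the 0-1 loss on the
clean label: for every z, E[ℓ̃(z,Ỹ)] = P[z ≠ Y].  Here p = P[Y = 1] and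
q = P[Ỹ = 1] = p(1−η₁) + (1−p)η₀. -/
theorem stmt6 (η₀ η₁ : ℝ)
    (h₀ : 0 ≤ η₀) (h₀' : η₀ < 1/2) (h₁ : 0 ≤ η₁) (h₁' : η₁ < 1/2)
    (hsum : η₀ + η₁ < 1)
    (p : ℝ) (hp : 0 ≤ p) (hp1 : p ≤ 1)
    (q : ℝ) (hq : q = p * (1 - η₁) + (1 - p) * η₀) :
    ∀ z : Bool,
      modLoss (fun b => if b then η₁ else η₀) z true * q
        + modLoss (fun b => if b then η₁ else η₀) z false * (1 - q)
      = (if z then 1 - p else p) := by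
  have hne : 1 - η₀ - η₁ ≠ 0 := by linarith
  intro z
  cases z <;> simp [modLoss, hq] <;> field_simp <;> ring
end

section
/- Let σ₀, σ₁ be distinct density matrices with Holevo-Helstrom measurement {E₀, E₁}, let μ be a probability measure on X × {σ₀, σ₁}, and let ν be the distribution on X × {0,1} obtained by measuring the label state with {E₀,E₁}. For g : X → {0,1} and h(x) = σ_{g(x)}, the 0-1 risks satisfy R̃_ν(g) = (‖σ₀−σ₁‖₁/2)·P_{(x,ρ)∼μ}[h(x) ≠ ρ] + tr[σ₀E₁] + (tr[σ₁E₀] − tr[σ₀E₁])·E_{μ₁}[g], where μ₁ is the first marginal of μ. -/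
open Matrix
open scoped Matrix ComplexOrder Classical

noncomputable def psqrt {ι : Type*} [Fintype ι] [DecidableEq ι] (A : Matrix ι ι ℂ) : Matrix ι ι ℂ :=
  if h : A.PosSemidef then
    (h.1.eigenvectorUnitary : Matrix ι ι ℂ) *
      Matrix.diagonal (((↑) : ℝ → ℂ) ∘ Real.sqrt ∘ h.1.eigenvalues) *
      (star (h.1.eigenvectorUnitary : Matrix ι ι ℂ))
  else 0

noncomputable def traceNorm {ι : Type*} [Fintype ι] [DecidableEq ι] (A : Matrix ι ι ℂ) : ℝ :=
  (psqrt (Aᴴ * A)).trace.re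

noncomputable def helstromProj {ι : Type*} [Fintype ι] [DecidableEq ι] (A : Matrix ι ι ℂ) : Matrix ι ι ℂ :=
  if h : A.IsHermitian then
    (h.eigenvectorUnitary : Matrix ι ι ℂ) *
      Matrix.diagonal (fun i => if 0 ≤ h.eigenvalues i then (1:ℂ) else 0) *
      (star (h.eigenvectorUnitary : Matrix ι ι ℂ))
  else 0

/-!
Both sides are affine in the four numbers `tr[σ_b E_y]`, so the identity reduces to the two
relations `tr[σ₀E₀] - tr[σ₁E₀] = ‖σ₀ - σ₁‖₁/2 = tr[σ₁E₁] - tr[σ₀E₁]`. The second follows from the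
first since `E₁ = 1 - E₀` and `tr σ₀ = tr σ₁`. For the first, `E₀` is the spectral projection of
`A = σ₀ - σ₁` onto its nonnegative eigenvalues, so `tr[A E₀]` is the sum of the positive parts of
the eigenvalues of `A`; as these eigenvalues sum to `tr A = 0`, that is half the sum of their
absolute values, which is `‖A‖₁`.
-/

namespace Matrix

variable {ι : Type*} [Fintype ι] [DecidableEq ι]

lemma IsHermitian.trace_cfc {𝕜 : Type*} [RCLike 𝕜] {A : Matrix ι ι 𝕜} (hA : A.IsHermitian)
    (f : ℝ → ℝ) : (cfc f A).trace = ∑ i, (f (hA.eigenvalues i) : 𝕜) := by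
  rw [hA.cfc_eq, IsHermitian.cfc, Unitary.conjStarAlgAut_apply, trace_mul_cycle,
    Unitary.coe_star_mul_self, one_mul, trace_diagonal]
  rfl

variable {A : Matrix ι ι ℂ}

lemma PosSemidef.psqrt_eq_cfc (hA : A.PosSemidef) : psqrt A = cfc Real.sqrt A := by
  rw [psqrt, dif_pos hA, hA.1.cfc_eq, IsHermitian.cfc, Unitary.conjStarAlgAut_apply]
  rfl

lemma IsHermitian.psqrt_conjTranspose_mul_self (hA : A.IsHermitian) :
    psqrt (Aᴴ * A) = cfc (fun x : ℝ => |x|) A := by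
  rw [(posSemidef_conjTranspose_mul_self A).psqrt_eq_cfc, hA.eq, ← sq,
    ← cfc_comp_pow Real.sqrt 2 A (ha := hA.isSelfAdjoint)]
  simp only [Real.sqrt_sq_eq_abs]

lemma IsHermitian.traceNorm_eq_sum_abs_eigenvalues (hA : A.IsHermitian) :
    traceNorm A = ∑ i, |hA.eigenvalues i| := by
  rw [traceNorm, hA.psqrt_conjTranspose_mul_self, hA.trace_cfc, Complex.re_sum]
  simp only [Complex.coe_algebraMap, Complex.ofReal_re]

lemma IsHermitian.helstromProj_eq_cfc (hA : A.IsHermitian) :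
    helstromProj A = cfc (fun x : ℝ => if 0 ≤ x then 1 else 0) A := by
  rw [helstromProj, dif_pos hA, hA.cfc_eq, IsHermitian.cfc, Unitary.conjStarAlgAut_apply]
  congr 3
  ext i
  split_ifs <;> simp [*]

lemma IsHermitian.re_trace_mul_helstromProj (hA : A.IsHermitian) :
    (A * helstromProj A).trace.re = ∑ i, max (hA.eigenvalues i) 0 := by
  have hprod : A * helstromProj A = cfc (fun x : ℝ => x * if 0 ≤ x then 1 else 0) A := by
    have hcont := A.finite_real_spectrum.continuousOn (fun x : ℝ => if 0 ≤ x then (1 : ℝ) else 0)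
    rw [hA.helstromProj_eq_cfc, cfc_mul (fun x : ℝ => x) _ A continuousOn_id hcont, cfc_id' ℝ A]
  rw [hprod, hA.trace_cfc, Complex.re_sum]
  refine Finset.sum_congr rfl fun i _ => ?_
  split_ifs with h
  · simp [h]
  · simp [(not_le.mp h).le]

lemma IsHermitian.re_trace_mul_helstromProj_of_trace_eq_zero (hA : A.IsHermitian)
    (htr : A.trace = 0) : (A * helstromProj A).trace.re = traceNorm A / 2 := by
  have hsum : ∑ i, hA.eigenvalues i = 0 := by
    simpa using congrArg Complex.re (hA.trace_eq_sum_eigenvalues.symm.trans htr)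
  have hmax (x : ℝ) : max x 0 = (x + |x|) / 2 := by
    rcases le_total 0 x with hx | hx
    · rw [max_eq_left hx, abs_of_nonneg hx]; ring
    · rw [max_eq_right hx, abs_of_nonpos hx]; ring
  simp only [hA.re_trace_mul_helstromProj, hA.traceNorm_eq_sum_abs_eigenvalues, hmax,
    ← Finset.sum_div, Finset.sum_add_distrib, hsum, zero_add]

end Matrix

lemma helstrom_error_prob_eq {ι : Type*} [Fintype ι] [DecidableEq ι]
    {σ₀ σ₁ E₀ E₁ : Matrix ι ι ℂ} (hσ : (σ₀ - σ₁).IsHermitian) (htr : σ₀.trace = σ₁.trace)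
    (hE₀ : E₀ = helstromProj (σ₀ - σ₁)) (hE₁ : E₁ = 1 - E₀) (b g : Bool) :
    ((if b then σ₁ else σ₀) * (if g then E₀ else E₁)).trace.re
      = traceNorm (σ₀ - σ₁) / 2 * (if g ≠ b then 1 else 0) + (σ₀ * E₁).trace.re
        + ((σ₁ * E₀).trace.re - (σ₀ * E₁).trace.re) * (if g then 1 else 0) := by
  have hE₀_gap : (σ₀ * E₀).trace.re - (σ₁ * E₀).trace.re = traceNorm (σ₀ - σ₁) / 2 := by
    rw [← Complex.sub_re, ← trace_sub, ← sub_mul, hE₀]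
    exact hσ.re_trace_mul_helstromProj_of_trace_eq_zero (by rw [trace_sub, htr, sub_self])
  have hE₁_gap : (σ₁ * E₁).trace.re - (σ₀ * E₁).trace.re
      = (σ₀ * E₀).trace.re - (σ₁ * E₀).trace.re := by
    simp only [hE₁, mul_sub, mul_one, trace_sub, Complex.sub_re, htr]
    ring
  cases b <;> cases g <;>
    simp only [Bool.false_eq_true, Bool.true_eq_false, ↓reduceIte, ne_eq, not_true_eq_false,
      not_false_eq_true, mul_zero, mul_one, zero_add, add_zero] <;>
    linarith

theorem stmt16_general {n : ℕ} {X : Type*} [Fintype X]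
    (σ₀ σ₁ : Matrix (Fin n) (Fin n) ℂ)
    (h₀ : σ₀.PosSemidef) (h₁ : σ₁.PosSemidef)
    (t₀ : σ₀.trace = 1) (t₁ : σ₁.trace = 1)
    (E₀ E₁ : Matrix (Fin n) (Fin n) ℂ)
    (hE₀ : E₀ = helstromProj (σ₀ - σ₁)) (hE₁ : E₁ = 1 - E₀)
    (μ : X × Bool → ℝ) (hμ1 : ∑ p, μ p = 1)
    (g : X → Bool) :
    (∑ p : X × Bool, μ p *
        (((if p.2 then σ₁ else σ₀) * (if g p.1 then E₀ else E₁)).trace).re)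
    = (traceNorm (σ₀ - σ₁) / 2) * (∑ p : X × Bool, μ p * (if g p.1 ≠ p.2 then 1 else 0))
      + ((σ₀ * E₁).trace).re
      + (((σ₁ * E₀).trace).re - ((σ₀ * E₁).trace).re)
        * (∑ p : X × Bool, μ p * (if g p.1 then 1 else 0)) := by
  simp only [helstrom_error_prob_eq (h₀.1.sub h₁.1) (t₀.trans t₁.symm) hE₀ hE₁, mul_add,
    Finset.sum_add_distrib, ← Finset.sum_mul, hμ1, Finset.mul_sum]
  simp only [mul_left_comm, one_mul]

/-- risk identity for the Holevo-Helstrom strategy.  Labels are encoded as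
Booleans (b = true ↔ label state σ₁); μ is a distribution on X × {σ₀,σ₁} given by a
probability mass function on X × Bool, ν(y|x,b) = tr[σ_b E_y], and h(x) = σ_{g(x)}.
Then R̃_ν(g) = (‖σ₀−σ₁‖₁/2)·P_μ[h(x) ≠ ρ] + tr[σ₀E₁] + (tr[σ₁E₀]−tr[σ₀E₁])·E_{μ₁}[g]. -/
theorem stmt16 {n : ℕ} {X : Type*} [Fintype X]
    (σ₀ σ₁ : Matrix (Fin n) (Fin n) ℂ)
    (h₀ : σ₀.PosSemidef) (h₁ : σ₁.PosSemidef)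
    (t₀ : σ₀.trace = 1) (t₁ : σ₁.trace = 1) (hne : σ₀ ≠ σ₁)
    (E₀ E₁ : Matrix (Fin n) (Fin n) ℂ)
    (hE₀ : E₀ = helstromProj (σ₀ - σ₁)) (hE₁ : E₁ = 1 - E₀)
    (μ : X × Bool → ℝ) (hμ : ∀ p, 0 ≤ μ p) (hμ1 : ∑ p, μ p = 1)
    (g : X → Bool) :
    (∑ p : X × Bool, μ p *
        (((if p.2 then σ₁ else σ₀) * (if g p.1 then E₀ else E₁)).trace).re)
    = (traceNorm (σ₀ - σ₁) / 2) * (∑ p : X × Bool, μ p * (if g p.1 ≠ p.2 then 1 else 0))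
      + ((σ₀ * E₁).trace).re
      + (((σ₁ * E₀).trace).re - ((σ₀ * E₁).trace).re)
        * (∑ p : X × Bool, μ p * (if g p.1 then 1 else 0)) :=
  stmt16_general σ₀ σ₁ h₀ h₁ t₀ t₁ E₀ E₁ hE₀ hE₁ μ hμ1 g
end
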